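/- arXiv:math/0605141 — 2 statements merged into one kernel-verified Lean document; each statement's English description precedes it below -/
import Mathlib

section
/- For an associative algebra A over a field K, the Gerstenhaber bracket [P,Q]_G = P∘Q - (-1)^{(|P|-1)(|Q|-1)} Q∘P on Hochschild cochains, where (P∘Q)(a_1,...,a_{p+q-1}) = Σ_i ±P(a_1,...,a_{i-1},Q(a_i,...,a_{i+q-1}),...,a_{p+q-1}), satisfies the graded Jacobi identity with respect to the shifted degree |P|-1. -/
/- STATEMENT 0: The Gerstenhaber bracket on Hochschild cochains satisfies the
graded Jacobi identity with respect to the shifted degree |P| - 1.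

We model Hochschild cochains in the "sequence model": an `n`-cochain
`P ∈ Hom(A^{⊗n}, A)` (a multilinear map) is viewed, via `hochOfMultilinear`,
as a function `(ℕ → A) → A` depending on the first `n` arguments.  The circle
operation `gCirc p q P Q` is the sum over insertions of the `q`-cochain `Q`
into the `p`-cochain `P` with Koszul signs, and the Gerstenhaber bracket is
`gBr p q P Q = P∘Q - (-1)^{(p-1)(q-1)} Q∘P`.  (Exponents like `(p-1)*(q-1)`
are written as `p*q + p + q + 1`, which has the same parity over ℤ, to avoid
natural-number subtraction.) -/

/-- Cochains in the sequence model. -/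
abbrev HCochain (A : Type) : Type := (ℕ → A) → A

/-- The cochain associated to a genuine multilinear Hochschild cochain. -/
noncomputable def hochOfMultilinear (K A : Type) [Field K] [Ring A] [Algebra K A]
    {n : ℕ} (P : MultilinearMap K (fun _ : Fin n => A) A) : HCochain A :=
  fun a => P (fun i => a i)

/-- Insertion of the `q`-cochain `Q` into the slot `i` of `P`. -/
noncomputable def hIns (A : Type) (q i : ℕ) (P Q : HCochain A) : HCochain A :=
  fun a => P (fun j =>
    if j < i then a j else if j = i then Q (fun k => a (i + k)) else a (j + q - 1))

/-- The Gerstenhaber circle operation `P ∘ Q` of a `p`-cochain and a `q`-cochain. -/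
noncomputable def gCirc (K A : Type) [Field K] [Ring A] [Algebra K A]
    (p q : ℕ) (P Q : HCochain A) : HCochain A :=
  ∑ i ∈ Finset.range p, ((-1 : K) ^ (i * (q + 1))) • hIns A q i P Q

/-- The Gerstenhaber bracket `[P,Q]_G = P∘Q - (-1)^{(p-1)(q-1)} Q∘P`. -/
noncomputable def gBr (K A : Type) [Field K] [Ring A] [Algebra K A]
    (p q : ℕ) (P Q : HCochain A) : HCochain A :=
  gCirc K A p q P Q - ((-1 : K) ^ (p * q + p + q + 1)) • gCirc K A q p Q P


section
variable {K A : Type} [Field K] [Ring A] [Algebra K A]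

lemma n1p (m n k l : ℕ) (h : m + 2*k = n + 2*l) : ((-1:K)^m = (-1)^n) := by
  calc (-1:K)^m = (-1)^(m+2*k) := by rw [pow_add, pow_mul, neg_one_sq, one_pow, mul_one]
    _ = (-1)^(n+2*l) := by rw [h]
    _ = (-1)^n := by rw [pow_add, pow_mul, neg_one_sq, one_pow, mul_one]

/-- `P` depends only on the first `n` arguments. -/
def Dep (A : Type) (n : ℕ) (P : HCochain A) : Prop :=
  ∀ a b : ℕ → A, (∀ k, k < n → a k = b k) → P a = P b

lemma dep_hoch {n : ℕ} (X : MultilinearMap K (fun _ : Fin n => A) A) :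
    Dep A n (hochOfMultilinear K A X) := by
  intro a b h
  unfold hochOfMultilinear
  congr 1
  funext i
  exact h i i.isLt

/-- Double disjoint insertion: `U` (degree `d1`) at slot `x`, `V` (degree `d2`) at
slot `y`, with `x < y`. -/
def DD (A : Type) (d1 d2 x y : ℕ) (P U V : HCochain A) : HCochain A :=
  fun a => P (fun t =>
    if t < x then a t
    else if t = x then U (fun k => a (x + k))
    else if t < y then a (t + d1 - 1)
    else if t = y then V (fun k => a (y + d1 - 1 + k))
    else a (t + d1 + d2 - 2))

lemma hIns_inside (b c i m : ℕ) (hm : m < b) (P Y Z : HCochain A) :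
    hIns A c (i+m) (hIns A b i P Y) Z = hIns A (b+c-1) i P (hIns A c m Y Z) := by
  funext a
  simp only [hIns]
  congr 1
  funext t
  split_ifs <;>
    first
      | rfl
      | omega
      | (congr 1 <;> omega)
      | (congr 1
         funext k
         split_ifs <;>
           first
             | rfl
             | omega
             | (congr 1 <;> omega)
             | (congr 1
                funext l
                congr 1
                omega))

lemma hIns_left (b c i j : ℕ) (hj : j < i) (P Y Z : HCochain A) :
    hIns A c j (hIns A b i P Y) Z = DD A c b j i P Z Y := by
  funext a
  simp only [hIns, DD]
  congr 1
  funext t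
  split_ifs <;>
    first
      | rfl
      | omega
      | (congr 1 <;> omega)
      | (congr 1
         funext k
         split_ifs <;>
           first
             | rfl
             | omega
             | (congr 1 <;> omega))

lemma hIns_right (b c i j : ℕ) (hj : i + b ≤ j) (P Y Z : HCochain A)
    (hY : Dep A b Y) :
    hIns A c j (hIns A b i P Y) Z = DD A b c i (j - b + 1) P Y Z := by
  funext a
  simp only [hIns, DD]
  congr 1
  funext t
  rcases lt_trichotomy t i with ht | ht | ht
  · rw [if_pos (show t < j by omega), if_pos ht, if_pos ht]
  · subst ht
    rw [if_neg (lt_irrefl t), if_pos rfl, if_neg (lt_irrefl t), if_pos rfl]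
    apply hY
    intro k hk
    rw [if_pos (show t + k < j by omega)]
  · rw [if_neg (show ¬ t < i by omega), if_neg (show ¬ t = i by omega),
      if_neg (show ¬ t < i by omega), if_neg (show ¬ t = i by omega)]
    rcases lt_trichotomy t (j - b + 1) with htj | htj | htj
    · rw [if_pos (show t + b - 1 < j by omega), if_pos htj]
    · rw [if_neg (show ¬ t + b - 1 < j by omega), if_pos (show t + b - 1 = j by omega),
        if_neg (show ¬ t < j - b + 1 by omega), if_pos htj]
      congr 1
      funext k
      congr 1
      omega
    · rw [if_neg (show ¬ t + b - 1 < j by omega), if_neg (show ¬ t + b - 1 = j by omega),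
        if_neg (show ¬ t < j - b + 1 by omega), if_neg (show ¬ t = j - b + 1 by omega)]
      congr 1
      omega

end

section
variable {K A : Type} [Field K] [Ring A] [Algebra K A]

lemma hIns_sum_left {ι : Type} (s : Finset ι) (f : ι → K) (g : ι → HCochain A)
    (d i : ℕ) (Z : HCochain A) :
    hIns A d i (∑ m ∈ s, f m • g m) Z = ∑ m ∈ s, f m • hIns A d i (g m) Z := by
  funext a
  simp [hIns, Finset.sum_apply, Pi.smul_apply]

lemma hIns_sub_left (U V Z : HCochain A) (d i : ℕ) :
    hIns A d i (U - V) Z = hIns A d i U Z - hIns A d i V Z := by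
  funext a
  simp [hIns]

lemma hIns_smul_left (c : K) (U Z : HCochain A) (d i : ℕ) :
    hIns A d i (c • U) Z = c • hIns A d i U Z := by
  funext a
  simp [hIns]

/-- The insertion into a multilinear cochain, as a linear map in the inserted value. -/
noncomputable def insLin {n : ℕ} (X : MultilinearMap K (fun _ : Fin n => A) A)
    (i : Fin n) (base : Fin n → A) : A →ₗ[K] A where
  toFun v := X (Function.update base i v)
  map_add' u v := X.map_update_add base i u v
  map_smul' c v := X.map_update_smul base i c v

lemma hIns_hoch_apply {n : ℕ} (X : MultilinearMap K (fun _ : Fin n => A) A)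
    {d i : ℕ} (hi : i < n) (Q : HCochain A) (a : ℕ → A) :
    hIns A d i (hochOfMultilinear K A X) Q a
      = insLin X ⟨i, hi⟩ (fun j : Fin n => if (j : ℕ) < i then a j else a ((j : ℕ) + d - 1))
          (Q (fun k => a (i + k))) := by
  simp only [hIns, hochOfMultilinear, insLin, LinearMap.coe_mk, AddHom.coe_mk]
  congr 1
  funext j
  by_cases hj : j = (⟨i, hi⟩ : Fin n)
  · subst hj
    simp [Function.update_self]
  · have hj' : (j : ℕ) ≠ i := by
      intro h
      exact hj (Fin.ext h)
    rw [Function.update_of_ne hj]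
    by_cases h2 : (j : ℕ) < i
    · simp [h2]
    · simp [h2, hj']

lemma hIns_hoch_sum {ι : Type} {n : ℕ} (X : MultilinearMap K (fun _ : Fin n => A) A)
    {d i : ℕ} (hi : i < n) (s : Finset ι) (f : ι → K) (g : ι → HCochain A) :
    hIns A d i (hochOfMultilinear K A X) (∑ m ∈ s, f m • g m)
      = ∑ m ∈ s, f m • hIns A d i (hochOfMultilinear K A X) (g m) := by
  funext a
  rw [hIns_hoch_apply X hi]
  have h1 : (∑ m ∈ s, f m • g m) (fun k => a (i + k))
      = ∑ m ∈ s, f m • (g m (fun k => a (i + k))) := by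
    simp [Finset.sum_apply]
  rw [h1, map_sum]
  simp only [map_smul]
  rw [Finset.sum_apply]
  apply Finset.sum_congr rfl
  intro m _
  rw [Pi.smul_apply, hIns_hoch_apply X hi]

lemma hIns_hoch_sub {n : ℕ} (X : MultilinearMap K (fun _ : Fin n => A) A)
    {d i : ℕ} (hi : i < n) (U V : HCochain A) :
    hIns A d i (hochOfMultilinear K A X) (U - V)
      = hIns A d i (hochOfMultilinear K A X) U - hIns A d i (hochOfMultilinear K A X) V := by
  funext a
  rw [Pi.sub_apply, hIns_hoch_apply X hi, hIns_hoch_apply X hi, hIns_hoch_apply X hi]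
  have h1 : (U - V) (fun k => a (i + k)) = U (fun k => a (i + k)) - V (fun k => a (i + k)) := rfl
  rw [h1, map_sub]

lemma hIns_hoch_smul {n : ℕ} (X : MultilinearMap K (fun _ : Fin n => A) A)
    {d i : ℕ} (hi : i < n) (c : K) (U : HCochain A) :
    hIns A d i (hochOfMultilinear K A X) (c • U)
      = c • hIns A d i (hochOfMultilinear K A X) U := by
  funext a
  rw [Pi.smul_apply, hIns_hoch_apply X hi, hIns_hoch_apply X hi]
  have h1 : (c • U) (fun k => a (i + k)) = c • (U (fun k => a (i + k))) := rfl
  rw [h1, map_smul]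

lemma hIns_hoch_zero {n : ℕ} (X : MultilinearMap K (fun _ : Fin n => A) A)
    {d i : ℕ} (hi : i < n) :
    hIns A d i (hochOfMultilinear K A X) (0 : HCochain A) = 0 := by
  funext a
  rw [hIns_hoch_apply X hi]
  have h1 : (0 : HCochain A) (fun k => a (i + k)) = 0 := rfl
  rw [h1, map_zero]
  rfl

lemma gCirc_sub_left (n d : ℕ) (U V Z : HCochain A) :
    gCirc K A n d (U - V) Z = gCirc K A n d U Z - gCirc K A n d V Z := by
  unfold gCirc
  rw [← Finset.sum_sub_distrib]
  apply Finset.sum_congr rfl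
  intro i _
  rw [hIns_sub_left, smul_sub]

lemma gCirc_smul_left (n d : ℕ) (c : K) (U Z : HCochain A) :
    gCirc K A n d (c • U) Z = c • gCirc K A n d U Z := by
  unfold gCirc
  rw [Finset.smul_sum]
  apply Finset.sum_congr rfl
  intro i _
  rw [hIns_smul_left, smul_comm]

lemma gCirc_hoch_sub_right {n : ℕ} (X : MultilinearMap K (fun _ : Fin n => A) A)
    (d : ℕ) (U V : HCochain A) :
    gCirc K A n d (hochOfMultilinear K A X) (U - V)
      = gCirc K A n d (hochOfMultilinear K A X) U - gCirc K A n d (hochOfMultilinear K A X) V := by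
  unfold gCirc
  rw [← Finset.sum_sub_distrib]
  apply Finset.sum_congr rfl
  intro i hi
  rw [hIns_hoch_sub X (Finset.mem_range.mp hi), smul_sub]

lemma gCirc_hoch_smul_right {n : ℕ} (X : MultilinearMap K (fun _ : Fin n => A) A)
    (d : ℕ) (c : K) (U : HCochain A) :
    gCirc K A n d (hochOfMultilinear K A X) (c • U)
      = c • gCirc K A n d (hochOfMultilinear K A X) U := by
  unfold gCirc
  rw [Finset.smul_sum]
  apply Finset.sum_congr rfl
  intro i hi
  rw [hIns_hoch_smul X (Finset.mem_range.mp hi), smul_comm]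

lemma gCirc_hoch_zero_right {n : ℕ} (X : MultilinearMap K (fun _ : Fin n => A) A) (d : ℕ) :
    gCirc K A n d (hochOfMultilinear K A X) (0 : HCochain A) = 0 := by
  unfold gCirc
  apply Finset.sum_eq_zero
  intro i hi
  rw [hIns_hoch_zero X (Finset.mem_range.mp hi), smul_zero]

lemma gCirc_zero_left (d : ℕ) (Z : HCochain A) : gCirc K A 0 d (0 : HCochain A) Z = 0 := by
  simp [gCirc]

lemma sum_range_swap' {M : Type} [AddCommMonoid M] (n : ℕ) (g : ℕ → ℕ → M) :
    ∑ y ∈ Finset.range n, ∑ x ∈ Finset.range y, g x y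
      = ∑ x ∈ Finset.range n, ∑ y ∈ Finset.Ico (x+1) n, g x y := by
  have h1 : ∀ y ∈ Finset.range n, ∑ x ∈ Finset.range y, g x y
      = ∑ x ∈ Finset.range n, if x < y then g x y else 0 := by
    intro y hy
    have hy' := Finset.mem_range.mp hy
    rw [← Finset.sum_filter]
    apply Finset.sum_congr _ (fun _ _ => rfl)
    ext x
    simp only [Finset.mem_range, Finset.mem_filter]
    omega
  rw [Finset.sum_congr rfl h1, Finset.sum_comm]
  apply Finset.sum_congr rfl
  intro x _
  rw [← Finset.sum_filter]
  apply Finset.sum_congr _ (fun _ _ => rfl)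
  ext y
  simp only [Finset.mem_range, Finset.mem_filter, Finset.mem_Ico]
  omega

end

set_option maxHeartbeats 1000000
section
variable {K A : Type} [Field K] [Ring A] [Algebra K A]

lemma gCirc_gCirc_left_expand (n b c : ℕ) (Xc Y Z : HCochain A) :
    gCirc K A (n+b-1) c (gCirc K A n b Xc Y) Z
      = ∑ i ∈ Finset.range n, ∑ j ∈ Finset.range (n+b-1),
          ((-1:K)^(i*(b+1)+j*(c+1))) • hIns A c j (hIns A b i Xc Y) Z := by
  unfold gCirc
  rw [Finset.sum_comm]
  apply Finset.sum_congr rfl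
  intro j _
  rw [hIns_sum_left, Finset.smul_sum]
  apply Finset.sum_congr rfl
  intro i _
  rw [smul_smul, ← pow_add, Nat.add_comm (j*(c+1)) (i*(b+1))]

lemma gCirc_gCirc_right_expand {n : ℕ} (X : MultilinearMap K (fun _ : Fin n => A) A)
    (b c : ℕ) (Y Z : HCochain A) :
    gCirc K A n (b+c-1) (hochOfMultilinear K A X) (gCirc K A b c Y Z)
      = ∑ i ∈ Finset.range n, ∑ m ∈ Finset.range b,
          ((-1:K)^(i*((b+c-1)+1)+m*(c+1))) •
            hIns A (b+c-1) i (hochOfMultilinear K A X) (hIns A c m Y Z) := by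
  unfold gCirc
  apply Finset.sum_congr rfl
  intro i hi
  rw [hIns_hoch_sum X (Finset.mem_range.mp hi), Finset.smul_sum]
  apply Finset.sum_congr rfl
  intro m _
  rw [smul_smul, ← pow_add]

lemma assoc_decomp {n : ℕ} (X : MultilinearMap K (fun _ : Fin n => A) A)
    (b c : ℕ) (Y Z : HCochain A) (hY : Dep A b Y) :
    gCirc K A (n+b-1) c (gCirc K A n b (hochOfMultilinear K A X) Y) Z
      = gCirc K A n (b+c-1) (hochOfMultilinear K A X) (gCirc K A b c Y Z)
        + ∑ y ∈ Finset.range n, ∑ x ∈ Finset.range y,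
            (((-1:K)^(y*(b+1)+x*(c+1))) • DD A c b x y (hochOfMultilinear K A X) Z Y
             + ((-1:K)^(x*(b+1)+(y+b-1)*(c+1))) • DD A b c x y (hochOfMultilinear K A X) Y Z) := by
  rw [gCirc_gCirc_left_expand, gCirc_gCirc_right_expand X]
  have key : ∀ i ∈ Finset.range n,
      (∑ j ∈ Finset.range (n+b-1),
          ((-1:K)^(i*(b+1)+j*(c+1))) • hIns A c j (hIns A b i (hochOfMultilinear K A X) Y) Z)
        = ((∑ x ∈ Finset.range i,
                ((-1:K)^(i*(b+1)+x*(c+1))) • DD A c b x i (hochOfMultilinear K A X) Z Y)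
           + ∑ m ∈ Finset.range b,
              ((-1:K)^(i*((b+c-1)+1)+m*(c+1))) •
                hIns A (b+c-1) i (hochOfMultilinear K A X) (hIns A c m Y Z))
          + ∑ y ∈ Finset.Ico (i+1) n,
              ((-1:K)^(i*(b+1)+(y+b-1)*(c+1))) • DD A b c i y (hochOfMultilinear K A X) Y Z := by
    intro i hi
    have hi' := Finset.mem_range.mp hi
    rw [Finset.range_eq_Ico,
      ← Finset.sum_Ico_consecutive _ (Nat.zero_le (i+b)) (show i+b ≤ n+b-1 by omega),
      ← Finset.sum_Ico_consecutive _ (Nat.zero_le i) (show i ≤ i+b by omega)]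
    have eL : (∑ j ∈ Finset.Ico 0 i,
        ((-1:K)^(i*(b+1)+j*(c+1))) • hIns A c j (hIns A b i (hochOfMultilinear K A X) Y) Z)
        = ∑ x ∈ Finset.range i,
            ((-1:K)^(i*(b+1)+x*(c+1))) • DD A c b x i (hochOfMultilinear K A X) Z Y := by
      rw [← Finset.range_eq_Ico]
      apply Finset.sum_congr rfl
      intro j hj
      rw [hIns_left b c i j (Finset.mem_range.mp hj)]
    have eM : (∑ j ∈ Finset.Ico i (i+b),
        ((-1:K)^(i*(b+1)+j*(c+1))) • hIns A c j (hIns A b i (hochOfMultilinear K A X) Y) Z)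
        = ∑ m ∈ Finset.range b,
            ((-1:K)^(i*((b+c-1)+1)+m*(c+1))) •
              hIns A (b+c-1) i (hochOfMultilinear K A X) (hIns A c m Y Z) := by
      rw [Finset.sum_Ico_eq_sum_range, show i + b - i = b by omega]
      apply Finset.sum_congr rfl
      intro k hk
      have hk' := Finset.mem_range.mp hk
      rw [hIns_inside b c i k hk']
      congr 1
      refine n1p _ _ 0 i ?_
      rw [show b + c - 1 + 1 = b + c by omega]
      ring
    have eR : (∑ j ∈ Finset.Ico (i+b) (n+b-1),
        ((-1:K)^(i*(b+1)+j*(c+1))) • hIns A c j (hIns A b i (hochOfMultilinear K A X) Y) Z)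
        = ∑ y ∈ Finset.Ico (i+1) n,
            ((-1:K)^(i*(b+1)+(y+b-1)*(c+1))) • DD A b c i y (hochOfMultilinear K A X) Y Z := by
      rw [Finset.sum_Ico_eq_sum_range, Finset.sum_Ico_eq_sum_range,
        show n + b - 1 - (i+b) = n - (i+1) by omega]
      apply Finset.sum_congr rfl
      intro k _
      rw [hIns_right b c i (i+b+k) (by omega) _ Y Z hY,
        show i + b + k - b + 1 = i + 1 + k by omega,
        show i + 1 + k + b - 1 = i + b + k by omega]
    rw [eL, eM, eR]
  rw [Finset.sum_congr rfl key, Finset.sum_add_distrib, Finset.sum_add_distrib]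
  have h2 : ∀ y ∈ Finset.range n,
      (∑ x ∈ Finset.range y,
          (((-1:K)^(y*(b+1)+x*(c+1))) • DD A c b x y (hochOfMultilinear K A X) Z Y
           + ((-1:K)^(x*(b+1)+(y+b-1)*(c+1))) • DD A b c x y (hochOfMultilinear K A X) Y Z))
        = (∑ x ∈ Finset.range y,
            ((-1:K)^(y*(b+1)+x*(c+1))) • DD A c b x y (hochOfMultilinear K A X) Z Y)
          + ∑ x ∈ Finset.range y,
              ((-1:K)^(x*(b+1)+(y+b-1)*(c+1))) • DD A b c x y (hochOfMultilinear K A X) Y Z :=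
    fun _ _ => Finset.sum_add_distrib
  rw [Finset.sum_congr rfl h2, Finset.sum_add_distrib,
    (sum_range_swap' n (fun x y =>
      ((-1:K)^(x*(b+1)+(y+b-1)*(c+1))) • DD A b c x y (hochOfMultilinear K A X) Y Z))]
  exact (add_right_comm _ _ _).trans (add_comm _ _)

lemma assoc_symm {n : ℕ} (X : MultilinearMap K (fun _ : Fin n => A) A)
    (b c : ℕ) (Y Z : HCochain A) (hY : Dep A b Y) (hZ : Dep A c Z) :
    gCirc K A (n+b-1) c (gCirc K A n b (hochOfMultilinear K A X) Y) Z
      - gCirc K A n (b+c-1) (hochOfMultilinear K A X) (gCirc K A b c Y Z)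
    = ((-1:K)^(b*c+b+c+1)) •
      (gCirc K A (n+c-1) b (gCirc K A n c (hochOfMultilinear K A X) Z) Y
        - gCirc K A n (c+b-1) (hochOfMultilinear K A X) (gCirc K A c b Z Y)) := by
  rw [assoc_decomp X b c Y Z hY, assoc_decomp X c b Z Y hZ]
  rw [add_sub_cancel_left, add_sub_cancel_left, Finset.smul_sum]
  apply Finset.sum_congr rfl
  intro y hy
  rw [Finset.smul_sum]
  apply Finset.sum_congr rfl
  intro x hx
  have hx' := Finset.mem_range.mp hx
  obtain ⟨y1, rfl⟩ : ∃ y1, y = y1 + 1 := ⟨y - 1, by omega⟩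
  have e1 : ((-1:K)^(x*(b+1)+(y1+1+b-1)*(c+1)))
      = ((-1:K)^(b*c+b+c+1)) * ((-1:K)^((y1+1)*(c+1)+x*(b+1))) := by
    rw [← pow_add, show y1 + 1 + b - 1 = y1 + b by omega]
    exact n1p _ _ (c+1) 0 (by ring)
  have e2 : ((-1:K)^((y1+1)*(b+1)+x*(c+1)))
      = ((-1:K)^(b*c+b+c+1)) * ((-1:K)^(x*(c+1)+(y1+1+c-1)*(b+1))) := by
    rw [← pow_add, show y1 + 1 + c - 1 = y1 + c by omega]
    exact n1p _ _ (b*c+c) 0 (by ring)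
  linear_combination (norm := module)
    e1 • (DD A b c x (y1+1) (hochOfMultilinear K A X) Y Z)
    + e2 • (DD A c b x (y1+1) (hochOfMultilinear K A X) Z Y)

end

section
variable {K A : Type} [Field K] [Ring A] [Algebra K A]

lemma n1sq (E : ℕ) : ((-1:K)^E) * (-1:K)^E = 1 := by
  rw [← pow_add, n1p (E+E) 0 0 E (by ring), pow_zero]

lemma gCirc_p_zero (d : ℕ) (U V : HCochain A) : gCirc K A 0 d U V = 0 := by
  simp [gCirc]

lemma gCirc_neg_left (n d : ℕ) (U Z : HCochain A) :
    gCirc K A n d (-U) Z = -(gCirc K A n d U Z) := by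
  have : (-U) = (0 : HCochain A) - U := by simp
  rw [this, gCirc_sub_left]
  have h0 : gCirc K A n d (0 : HCochain A) Z = 0 := by
    unfold gCirc
    apply Finset.sum_eq_zero
    intro i _
    have : hIns A d i (0 : HCochain A) Z = 0 := by
      funext a
      simp [hIns]
    rw [this, smul_zero]
  rw [h0, zero_sub]

end

/-- Graded Jacobi identity for the Gerstenhaber bracket, with respect to the
shifted degrees `p-1`, `q-1`, `r-1`. -/
theorem gerstenhaber_bracket_graded_jacobi
    (K A : Type) [Field K] [CharZero K] [Ring A] [Algebra K A]
    (p q r : ℕ)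
    (P : MultilinearMap K (fun _ : Fin p => A) A)
    (Q : MultilinearMap K (fun _ : Fin q => A) A)
    (R : MultilinearMap K (fun _ : Fin r => A) A) :
    gBr K A p (q + r - 1) (hochOfMultilinear K A P)
        (gBr K A q r (hochOfMultilinear K A Q) (hochOfMultilinear K A R)) =
      gBr K A (p + q - 1) r
        (gBr K A p q (hochOfMultilinear K A P) (hochOfMultilinear K A Q))
        (hochOfMultilinear K A R)
      + ((-1 : K) ^ (p * q + p + q + 1)) •
        gBr K A q (p + r - 1) (hochOfMultilinear K A Q)
          (gBr K A p r (hochOfMultilinear K A P) (hochOfMultilinear K A R)) := by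
  by_cases hqr0 : q = 0 ∧ r = 0
  · -- degenerate case q = r = 0
    obtain ⟨rfl, rfl⟩ := hqr0
    rcases Nat.eq_zero_or_pos p with rfl | hp
    · simp [gBr, gCirc]
    have h00 : gBr K A 0 0 (hochOfMultilinear K A Q) (hochOfMultilinear K A R) = 0 := by
      simp [gBr, gCirc]
    rw [h00, show (0+0-1 : ℕ) = 0 from rfl, show p+0-1 = p-1 by omega]
    have H := assoc_symm P 0 0 (hochOfMultilinear K A Q) (hochOfMultilinear K A R)
      (dep_hoch Q) (dep_hoch R)
    simp only [gCirc_p_zero, gCirc_hoch_zero_right, sub_zero] at H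
    rw [show p+0-1 = p-1 by omega] at H
    simp only [gBr, gCirc_p_zero, gCirc_hoch_zero_right, smul_zero, sub_zero, zero_sub,
      gCirc_sub_left, gCirc_smul_left, gCirc_neg_left, gCirc_hoch_sub_right,
      gCirc_hoch_smul_right]
    have hs : ((-1:K)^(p*0+p+0+1)) * ((-1:K)^(0*(p-1)+0+(p-1)+1)) = -1 := by
      rw [← pow_add, n1p (p*0+p+0+1 + (0*(p-1)+0+(p-1)+1)) 1 0 p (by omega), pow_one]
    linear_combination (norm := module) -H + hs • (gCirc K A (p-1) 0
      (gCirc K A p 0 (hochOfMultilinear K A P) (hochOfMultilinear K A R))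
      (hochOfMultilinear K A Q))
  by_cases hpq0 : p = 0 ∧ q = 0
  · -- degenerate case p = q = 0
    obtain ⟨rfl, rfl⟩ := hpq0
    rw [show (0+0-1 : ℕ) = 0 from rfl, show (0:ℕ)+r-1 = r-1 by omega]
    have H := assoc_symm R 0 0 (hochOfMultilinear K A Q) (hochOfMultilinear K A P)
      (dep_hoch Q) (dep_hoch P)
    simp only [gCirc_p_zero, gCirc_hoch_zero_right, sub_zero] at H
    rw [show r+0-1 = r-1 by omega] at H
    simp only [gBr, gCirc_p_zero, gCirc_hoch_zero_right, smul_zero, sub_zero, zero_sub,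
      gCirc_sub_left, gCirc_smul_left, gCirc_neg_left, gCirc_hoch_sub_right,
      gCirc_hoch_smul_right, smul_neg, neg_neg]
    linear_combination (norm := module)
      (((-1:K)^(0*(r-1)+0+(r-1)+1)) * ((-1:K)^(0*r+0+r+1))) • H
  by_cases hpr0 : p = 0 ∧ r = 0
  · -- degenerate case p = r = 0
    obtain ⟨rfl, rfl⟩ := hpr0
    rw [show q+0-1 = q-1 by omega, show (0:ℕ)+q-1 = q-1 by omega,
      show (0+0-1 : ℕ) = 0 from rfl]
    have H := assoc_symm Q 0 0 (hochOfMultilinear K A R) (hochOfMultilinear K A P)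
      (dep_hoch R) (dep_hoch P)
    simp only [gCirc_p_zero, gCirc_hoch_zero_right, sub_zero] at H
    rw [show q+0-1 = q-1 by omega] at H
    simp only [gBr, gCirc_p_zero, gCirc_hoch_zero_right, smul_zero, sub_zero, zero_sub,
      gCirc_sub_left, gCirc_smul_left, gCirc_neg_left, gCirc_hoch_sub_right,
      gCirc_hoch_smul_right, smul_neg, neg_neg]
    have hs3 : ((-1:K)^(0*(q-1)+0+(q-1)+1)) = ((-1:K)^(0*q+0+q+1)) * (-1) := by
      rw [n1p (0*(q-1)+0+(q-1)+1) ((0*q+0+q+1)+1) 1 0 (by omega), pow_succ]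
    linear_combination (norm := module)
      (-((-1:K)^(0*(q-1)+0+(q-1)+1))) • H
      + hs3 • (gCirc K A (q-1) 0
          (gCirc K A q 0 (hochOfMultilinear K A Q) (hochOfMultilinear K A P))
          (hochOfMultilinear K A R))
  · -- main case
    obtain ⟨k1, hk1⟩ : ∃ t, q + r = t + 1 := ⟨q + r - 1, by omega⟩
    obtain ⟨k2, hk2⟩ : ∃ t, p + q = t + 1 := ⟨p + q - 1, by omega⟩
    obtain ⟨k3, hk3⟩ : ∃ t, p + r = t + 1 := ⟨p + r - 1, by omega⟩
    have HP := assoc_symm P q r (hochOfMultilinear K A Q) (hochOfMultilinear K A R)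
      (dep_hoch Q) (dep_hoch R)
    have HQ := assoc_symm Q p r (hochOfMultilinear K A P) (hochOfMultilinear K A R)
      (dep_hoch P) (dep_hoch R)
    have HR := assoc_symm R p q (hochOfMultilinear K A P) (hochOfMultilinear K A Q)
      (dep_hoch P) (dep_hoch Q)
    rw [show q + r - 1 = k1 by omega, show p + q - 1 = k2 by omega,
      show p + r - 1 = k3 by omega]
    rw [show p + q - 1 = k2 by omega, show q + r - 1 = k1 by omega,
      show p + r - 1 = k3 by omega, show r + q - 1 = k1 by omega] at HP
    rw [show q + p - 1 = k2 by omega, show p + r - 1 = k3 by omega,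
      show q + r - 1 = k1 by omega, show r + p - 1 = k3 by omega] at HQ
    rw [show r + p - 1 = k3 by omega, show p + q - 1 = k2 by omega,
      show r + q - 1 = k1 by omega, show q + p - 1 = k2 by omega] at HR
    have hk1z : (q:ℤ) + r = (k1:ℤ) + 1 := by exact_mod_cast hk1
    have hk2z : (p:ℤ) + q = (k2:ℤ) + 1 := by exact_mod_cast hk2
    have hk3z : (p:ℤ) + r = (k3:ℤ) + 1 := by exact_mod_cast hk3
    have hm1 : ((-1:K)^(p*k1+p+k1+1))
        = ((-1:K)^(p*q+p+q+1)) * ((-1:K)^(p*r+p+r+1)) := by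
      rw [← pow_add]
      refine n1p _ _ (p+1) 0 ?_
      zify
      linear_combination (-(p:ℤ)-1) * hk1z
    have hm2 : ((-1:K)^(k2*r+k2+r+1))
        = ((-1:K)^(q*r+q+r+1)) * ((-1:K)^(p*r+p+r+1)) := by
      rw [← pow_add]
      refine n1p _ _ (r+1) 0 ?_
      zify
      linear_combination (-(r:ℤ)-1) * hk2z
    have hm3 : ((-1:K)^(q*k3+q+k3+1))
        = ((-1:K)^(p*q+p+q+1)) * ((-1:K)^(q*r+q+r+1)) := by
      rw [← pow_add]
      refine n1p _ _ (q+1) 0 ?_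
      zify
      linear_combination (-(q:ℤ)-1) * hk3z
    simp only [gBr]
    rw [hm1, hm2, hm3]
    simp only [gCirc_hoch_sub_right, gCirc_hoch_smul_right, gCirc_sub_left, gCirc_smul_left]
    have hsq : ((-1:K)^(p*q+p+q+1)) * ((-1:K)^(p*q+p+q+1)) = 1 := n1sq _
    linear_combination (norm := module)
      -HP + ((-1:K)^(p*q+p+q+1)) • HQ
      - (((-1:K)^(q*r+q+r+1)) * ((-1:K)^(p*r+p+r+1))) • HR
      + (((-1:K)^(q*r+q+r+1)) * hsq) • (gCirc K A k3 q
          (gCirc K A p r (hochOfMultilinear K A P) (hochOfMultilinear K A R))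
          (hochOfMultilinear K A Q))
      - (((-1:K)^(q*r+q+r+1)) * ((-1:K)^(p*r+p+r+1)) * hsq) • (gCirc K A k3 q
          (gCirc K A r p (hochOfMultilinear K A R) (hochOfMultilinear K A P))
          (hochOfMultilinear K A Q))
end

section
/- Suppose m: ΣDer(A) ⊗ A ⊗ Der(A) → A is defined by m(v₁, f, v₂) = μ·v₂(v₁(f)) + ν·v₁(v₂(f)) for fixed scalars μ, ν ∈ K, for every commutative algebra A, and suppose the relation v₂(m(v₁,f,v₃)) + m([v₁,v₂], f, v₃) + m(v₁, v₃(f), v₂) − (the same terms with v₂ and v₃ exchanged) = 0 holds for all v₁,v₂,v₃ ∈ Der(A), f ∈ A, and all such A. Then μ = ν = 0. -/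
/- STATEMENT 11: If m(v₁, f, v₂) = μ·v₂(v₁(f)) + ν·v₁(v₂(f)) (for fixed
scalars μ, ν ∈ K, naturally in the commutative K-algebra A) satisfies
v₂(m(v₁,f,v₃)) + m([v₁,v₂], f, v₃) + m(v₁, v₃(f), v₂)
  − (v₃(m(v₁,f,v₂)) + m([v₁,v₃], f, v₂) + m(v₁, v₂(f), v₃)) = 0
for all v₁,v₂,v₃ ∈ Der(A), f ∈ A and all such A, then μ = ν = 0.
Here ⁅v,w⁆ is the commutator of derivations. -/

/-- The candidate natural operation m(v₁, f, v₂) = μ·v₂(v₁(f)) + ν·v₁(v₂(f)). -/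
noncomputable def mOp' (K : Type) [Field K] (A : Type) [CommRing A] [Algebra K A]
    (μ ν : K) (v₁ : Derivation K A A) (f : A) (v₂ : Derivation K A A) : A :=
  μ • v₂ (v₁ f) + ν • v₁ (v₂ f)

open Polynomial in
set_option maxHeartbeats 1000000 in
theorem coherence_forces_vanishing_mu_nu
    (K : Type) [Field K] [CharZero K] (μ ν : K)
    (hrel : ∀ (A : Type) [CommRing A] [Algebra K A]
      (v₁ v₂ v₃ : Derivation K A A) (f : A),
      v₂ (mOp' K A μ ν v₁ f v₃)
        + mOp' K A μ ν ⁅v₁, v₂⁆ f v₃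
        + mOp' K A μ ν v₁ (v₃ f) v₂
        - (v₃ (mOp' K A μ ν v₁ f v₂)
            + mOp' K A μ ν ⁅v₁, v₃⁆ f v₂
            + mOp' K A μ ν v₁ (v₂ f) v₃) = 0) :
    μ = 0 ∧ ν = 0 := by
  have hμ := hrel (Polynomial K) ((X:K[X]) • derivative') derivative' ((X:K[X]) • derivative') X
  have hν := hrel (Polynomial K) derivative' derivative' ((X:K[X]) • derivative') (X^2)
  simp only [mOp', Derivation.commutator_apply, Derivation.smul_apply, derivative'_apply,
    Derivation.coeFn_coe, derivative_X, derivative_one, mul_one, mul_zero, smul_zero,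
    derivative_mul, derivative_smul, smul_eq_mul, map_add, map_mul, zero_add, add_zero,
    one_mul, zero_mul, map_smul, derivative_zero, smul_add, map_sub, sub_self, zero_sub,
    sub_zero, smul_neg, neg_zero, derivative_X_pow, derivative_ofNat, map_pow, map_ofNat,
    derivative_C, Polynomial.derivative_natCast, nsmul_eq_mul, Nat.cast_ofNat, pow_one] at hμ hν
  have h1 := congrArg (Polynomial.eval 1) hμ
  have h2 := congrArg (Polynomial.eval 1) hν
  simp at h1 h2
  exact ⟨h1, by linear_combination h2/4 - h1⟩
end
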